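/- Let i ∈ {1,...,s}, p an odd prime, and let g ∈ (Z/p^sZ)^n be the vector consisting of p copies of each element of ⟨p^{i-1}⟩ \ ⟨p^i⟩ taken up to sign (one representative of each ± pair), together with p-1 copies of each element of ⟨p^j⟩ \ ⟨p^{j+1}⟩ up to sign for every j ∈ {i,...,s-1}. Then the cyclic module ⟨g⟩ is Lee-equidistant: every nonzero element of ⟨g⟩ has Lee weight p^{2s-i}(p^2-1)/8. -/

import Mathlib

/-- The Lee weight of an element of `ZMod m`. -/
def leeW (m : ℕ) (a : ZMod m) : ℕ := min a.val (m - a.val)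

/-- The Lee weight of a vector over `ZMod m`. -/
def leeWV (m n : ℕ) (x : Fin n → ZMod m) : ℕ := ∑ i, leeW m (x i)

/-!
The coordinates of `g` are nonzero and the modulus is odd, so no coordinate equals its negative,
and the counting hypotheses give, for every even `F` with `F 0 = 0`,
`2 ∑ₜ F (g t) = p ∑_{a ∈ ⟨p^(i-1)⟩} F a - ∑_{a ∈ ⟨p^i⟩} F a`.
Take `F a = wt_L (λ a)` and write `λ = p^v u` with `u` a unit. As `a` runs over
`⟨p^k⟩ = {p^k t : t < p^(s-k)}`, `λ a` runs `p^v` times over `u ⟨p^(k+v)⟩ = ⟨p^(k+v)⟩`, whose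
elements have Lee weights `p^(k+v) min(t, p^(s-k-v) - t)`; hence
`4 ∑_{a ∈ ⟨p^k⟩} wt_L (λ a) = p^(2s-k) - p^(k+2v)`. The terms `p^(k+2v)` cancel in the
combination above, which leaves `8 wt_L (λ g) = p^(2s-i) (p^2 - 1)` for every `λ g ≠ 0`.
-/

open Finset

lemma Function.Periodic.sum_range_mul {M : Type*} [AddCommMonoid M] {f : ℕ → M} {d : ℕ}
    (hf : Function.Periodic f d) (n : ℕ) :
    ∑ t ∈ range (n * d), f t = n • ∑ t ∈ range d, f t := by
  induction n with
  | zero => simp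
  | succ n ih =>
    rw [add_mul, one_mul, sum_range_add, ih, succ_nsmul]
    exact congrArg _ (sum_congr rfl fun t _ => by rw [add_comm]; simpa using hf.nat_mul n t)

lemma sum_range_min_sub (r : ℕ) :
    ∑ t ∈ range (2 * r + 1), min t (2 * r + 1 - t) = r * (r + 1) := by
  have lower : ∑ t ∈ range (r + 1), min t (2 * r + 1 - t) = ∑ t ∈ range (r + 1), t :=
    sum_congr rfl fun t ht => by rw [mem_range] at ht; omega
  have upper : ∑ t ∈ range r, min (r + 1 + t) (2 * r + 1 - (r + 1 + t))
      = ∑ t ∈ range (r + 1), t := by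
    rw [sum_range_succ', ← sum_range_reflect]
    exact sum_congr rfl fun t ht => by rw [mem_range] at ht; omega
  have split := sum_range_add (fun t => min t (2 * r + 1 - t)) (r + 1) r
  have gauss := sum_range_id_mul_two (r + 1)
  rw [show r + 1 + r = 2 * r + 1 by ring, lower, upper] at split
  rw [split]
  simp only [add_tsub_cancel_right] at gauss
  linarith

theorem sum_card_filter_eq_or_eq_neg_smul {ι α M : Type*} [Fintype ι] [Fintype α] [DecidableEq α]
    [InvolutiveNeg α] [AddCommMonoid M] {g : ι → α} (hg : ∀ t, g t ≠ -g t) {f : α → M}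
    (hf : ∀ a, f (-a) = f a) :
    ∑ a, #{t | g t = a ∨ g t = -a} • f a = 2 • ∑ t, f (g t) := by
  simp_rw [← sum_const]
  rw [sum_comm' (t' := univ) (s' := fun t => {g t, -g t})]
  · simp_rw [sum_pair (hg _), hf, ← two_nsmul, smul_sum]
  · intro a t
    simp only [mem_univ, mem_filter, mem_insert, mem_singleton, true_and, and_true]
    rw [eq_comm (a := g t) (b := -a), neg_eq_iff_eq_neg, eq_comm (a := g t)]

lemma leeW_neg {m : ℕ} [NeZero m] (a : ZMod m) : leeW m (-a) = leeW m a := by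
  rcases eq_or_ne a 0 with rfl | ha
  · rw [neg_zero]
  · have := ZMod.val_lt a
    rw [leeW, leeW, ZMod.neg_val, if_neg ha]
    omega

lemma leeW_zero (m : ℕ) : leeW m 0 = 0 := by
  simp [leeW]

lemma ZMod.natCast_dvd_iff_dvd_val {m d : ℕ} [NeZero m] (hd : d ∣ m) (a : ZMod m) :
    (d : ZMod m) ∣ a ↔ d ∣ a.val := by
  constructor
  · rintro ⟨b, rfl⟩
    rw [ZMod.val_mul, ZMod.val_natCast, Nat.dvd_mod_iff hd]
    exact ((Nat.dvd_mod_iff hd).mpr dvd_rfl).mul_right _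
  · rintro ⟨c, hc⟩
    exact ⟨c, by rw [← ZMod.natCast_zmod_val a, hc, Nat.cast_mul]⟩

section PowMultiples

variable {p s : ℕ}

open Classical in
noncomputable def powMultiples (p s k : ℕ) [NeZero (p ^ s)] : Finset (ZMod (p ^ s)) :=
  univ.filter (· ∈ Ideal.span {(p : ZMod (p ^ s)) ^ k})

lemma mem_powMultiples [NeZero (p ^ s)] {k : ℕ} {a : ZMod (p ^ s)} :
    a ∈ powMultiples p s k ↔ a ∈ Ideal.span {(p : ZMod (p ^ s)) ^ k} := by
  simp [powMultiples]

lemma natCast_pow_eq_zero_of_le {n : ℕ} (h : s ≤ n) : (p : ZMod (p ^ s)) ^ n = 0 :=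
  pow_eq_zero_of_le h (by rw [← Nat.cast_pow, ZMod.natCast_self])

lemma sum_powMultiples_eq_sum_range {M : Type*} [AddCommMonoid M] [NeZero (p ^ s)] {k : ℕ}
    (hk : k ≤ s) (F : ZMod (p ^ s) → M) :
    ∑ a ∈ powMultiples p s k, F a = ∑ t ∈ range (p ^ (s - k)), F ((p : ZMod (p ^ s)) ^ k * t) := by
  have hps : p ^ k * p ^ (s - k) = p ^ s := by rw [← pow_add, Nat.add_sub_cancel' hk]
  have hpk : 0 < p ^ k := Nat.pos_of_dvd_of_pos ⟨_, hps.symm⟩ (NeZero.pos _)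
  have hcast (t : ℕ) : (p : ZMod (p ^ s)) ^ k * t = ((p ^ k * t : ℕ) : ZMod (p ^ s)) := by
    push_cast; rfl
  have hdvd (a : ZMod (p ^ s)) : a ∈ powMultiples p s k ↔ p ^ k ∣ a.val := by
    rw [mem_powMultiples, Ideal.mem_span_singleton, ← Nat.cast_pow,
      ZMod.natCast_dvd_iff_dvd_val ⟨_, hps.symm⟩]
  have hinv {a : ZMod (p ^ s)} (ha : a ∈ powMultiples p s k) :
      (p : ZMod (p ^ s)) ^ k * (a.val / p ^ k : ℕ) = a := by
    rw [hcast, Nat.mul_div_cancel' ((hdvd a).mp ha), ZMod.natCast_zmod_val]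
  refine sum_nbij' (fun a => a.val / p ^ k) (fun t => (p : ZMod (p ^ s)) ^ k * t)
    (fun a _ => ?_) (fun t _ => ?_) (fun a ha => hinv ha) (fun t ht => ?_)
    (fun a ha => by rw [hinv ha])
  · exact mem_range.mpr (Nat.div_lt_of_lt_mul ((ZMod.val_lt a).trans_eq hps.symm))
  · exact mem_powMultiples.mpr (Ideal.mul_mem_right _ _ (Ideal.mem_span_singleton_self _))
  · have ht : p ^ k * t < p ^ s :=
      lt_of_lt_of_eq (Nat.mul_lt_mul_of_pos_left (mem_range.mp ht) hpk) hps
    simp only [hcast, ZMod.val_cast_of_lt ht, Nat.mul_div_cancel_left _ hpk]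

lemma sum_powMultiples_unit_mul {M : Type*} [AddCommMonoid M] [NeZero (p ^ s)] (k : ℕ)
    {u : ZMod (p ^ s)} (hu : IsUnit u) (F : ZMod (p ^ s) → M) :
    ∑ a ∈ powMultiples p s k, F (u * a) = ∑ a ∈ powMultiples p s k, F a := by
  simp only [powMultiples, sum_filter]
  refine Fintype.sum_equiv (Units.mulLeft hu.unit) _ _ fun a => ?_
  rw [show hu.unit.mulLeft a = u * a from rfl, Ideal.unit_mul_mem_iff_mem _ hu]

lemma leeW_natCast_pow_mul [NeZero (p ^ s)] {j t : ℕ} (hj : j ≤ s) (ht : t < p ^ (s - j)) :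
    leeW (p ^ s) ((p : ZMod (p ^ s)) ^ j * t) = p ^ j * min t (p ^ (s - j) - t) := by
  have hps : p ^ j * p ^ (s - j) = p ^ s := by rw [← pow_add, Nat.add_sub_cancel' hj]
  have hpj : 0 < p ^ j := Nat.pos_of_dvd_of_pos ⟨_, hps.symm⟩ (NeZero.pos _)
  have hlt : p ^ j * t < p ^ s := lt_of_lt_of_eq (Nat.mul_lt_mul_of_pos_left ht hpj) hps
  rw [leeW, show (p : ZMod (p ^ s)) ^ j * t = ((p ^ j * t : ℕ) : ZMod (p ^ s)) by push_cast; rfl,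
    ZMod.val_cast_of_lt hlt, ← hps, ← Nat.mul_sub, min_mul_mul_left]

lemma four_mul_sum_leeW_powMultiples_add [NeZero (p ^ s)] (hodd : Odd p) {j : ℕ} (hj : j ≤ s) :
    4 * ∑ a ∈ powMultiples p s j, leeW (p ^ s) a + p ^ j = p ^ (2 * s - j) := by
  obtain ⟨r, hr⟩ := hodd.pow (n := s - j)
  rw [sum_powMultiples_eq_sum_range hj, sum_congr rfl fun t ht =>
    leeW_natCast_pow_mul hj (mem_range.mp ht), ← mul_sum, hr, sum_range_min_sub,
    show 2 * s - j = j + 2 * (s - j) by omega, pow_add, pow_mul', hr]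
  ring

lemma four_mul_sum_leeW_pow_mul_unit_mul_add [NeZero (p ^ s)] (hodd : Odd p) {u : ZMod (p ^ s)}
    (hu : IsUnit u) {k v : ℕ} (hkv : k + v ≤ s) :
    4 * ∑ a ∈ powMultiples p s k, leeW (p ^ s) ((p : ZMod (p ^ s)) ^ v * u * a) + p ^ (k + 2 * v)
      = p ^ (2 * s - k) := by
  set F : ℕ → ℕ := fun t => leeW (p ^ s) (u * ((p : ZMod (p ^ s)) ^ (k + v) * t))
  have hF : Function.Periodic F (p ^ (s - (k + v))) := fun t => by
    simp only [F, Nat.cast_add, mul_add, Nat.cast_pow, ← pow_add, Nat.add_sub_cancel' hkv,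
      natCast_pow_eq_zero_of_le le_rfl, add_zero]
  have hsum : ∑ a ∈ powMultiples p s k, leeW (p ^ s) ((p : ZMod (p ^ s)) ^ v * u * a)
      = p ^ v * ∑ a ∈ powMultiples p s (k + v), leeW (p ^ s) a := by
    calc _ = ∑ t ∈ range (p ^ v * p ^ (s - (k + v))), F t := by
          rw [sum_powMultiples_eq_sum_range (by omega), ← pow_add,
            show v + (s - (k + v)) = s - k by omega]
          exact sum_congr rfl fun t _ => by simp only [F, pow_add]; ring_nf
      _ = p ^ v * ∑ a ∈ powMultiples p s (k + v), leeW (p ^ s) (u * a) := by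
          rw [hF.sum_range_mul, sum_powMultiples_eq_sum_range hkv, smul_eq_mul]
      _ = _ := by rw [sum_powMultiples_unit_mul _ hu]
  have hval := four_mul_sum_leeW_powMultiples_add hodd hkv
  rw [hsum, show 2 * s - k = v + (2 * s - (k + v)) by omega,
    pow_add p v (2 * s - (k + v)), ← hval]
  ring

end PowMultiples

lemma exists_mem_span_pow_notMem_span_pow_succ {R : Type*} [CommSemiring R] {c a : R} {k s : ℕ}
    (hc : c ^ s = 0) (ha : a ≠ 0) (hk : a ∈ Ideal.span {c ^ k}) :
    ∃ j, k ≤ j ∧ j < s ∧ a ∈ Ideal.span {c ^ j} ∧ a ∉ Ideal.span {c ^ (j + 1)} := by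
  classical
  simp only [Ideal.mem_span_singleton] at hk ⊢
  have hs : ¬ c ^ s ∣ a := by rwa [hc, zero_dvd_iff]
  have hex : ∃ n, ¬ c ^ n ∣ a := ⟨s, hs⟩
  have hmono {m n : ℕ} (h : m ≤ n) (hn : c ^ n ∣ a) : c ^ m ∣ a := (pow_dvd_pow c h).trans hn
  have hkn : k < Nat.find hex := lt_of_not_ge fun h => Nat.find_spec hex (hmono h hk)
  have hns : Nat.find hex ≤ s := Nat.find_min' hex hs
  refine ⟨Nat.find hex - 1, by omega, by omega, not_not.mp (Nat.find_min hex (by omega)), ?_⟩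
  rw [Nat.sub_add_cancel (by omega)]
  exact Nat.find_spec hex

lemma ZMod.exists_eq_pow_mul_isUnit {p s : ℕ} [NeZero (p ^ s)] (hp : p.Prime) {a : ZMod (p ^ s)}
    (ha : a ≠ 0) : ∃ v u, IsUnit u ∧ a = (p : ZMod (p ^ s)) ^ v * u := by
  have hval : a.val ≠ 0 := (ZMod.val_ne_zero a).mpr ha
  refine ⟨a.val.factorization p, (a.val / p ^ a.val.factorization p : ℕ), ?_, ?_⟩
  · rw [ZMod.isUnit_iff_coprime]
    exact (Nat.coprime_comm.mp
      (hp.coprime_iff_not_dvd.mpr (Nat.not_dvd_ordCompl hp hval))).pow_right _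
  · rw [← Nat.cast_pow, ← Nat.cast_mul, Nat.mul_div_cancel' (Nat.ordProj_dvd _ _),
      ZMod.natCast_zmod_val]

lemma pow_mul_smul_eq_zero_of_le {p s k N : ℕ} {g : Fin N → ZMod (p ^ s)}
    (hg : ∀ t, g t ∈ Ideal.span {(p : ZMod (p ^ s)) ^ k}) {v : ℕ}
    (h : s ≤ v + k) (u : ZMod (p ^ s)) : ((p : ZMod (p ^ s)) ^ v * u) • g = 0 := by
  funext t
  obtain ⟨b, hb⟩ := Ideal.mem_span_singleton'.mp (hg t)
  rw [Pi.smul_apply, Pi.zero_apply, smul_eq_mul, ← hb,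
    show (p : ZMod (p ^ s)) ^ v * u * (b * p ^ k) = p ^ (v + k) * (u * b) by ring,
    natCast_pow_eq_zero_of_le h, zero_mul]

section Construction

variable {p s k N : ℕ} [NeZero (p ^ s)] {g : Fin N → ZMod (p ^ s)}

lemma card_filter_add_ite_mem_powMultiples (hp : 0 < p)
    (hcoords : ∀ t, g t ∈ Ideal.span {(p : ZMod (p ^ s)) ^ k})
    (hcount1 : ∀ a : ZMod (p ^ s), a ∈ Ideal.span {(p : ZMod (p ^ s)) ^ k} →
      a ∉ Ideal.span {(p : ZMod (p ^ s)) ^ (k + 1)} → #{t | g t = a ∨ g t = -a} = p)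
    (hcount2 : ∀ j, k + 1 ≤ j → j ≤ s - 1 → ∀ a : ZMod (p ^ s),
      a ∈ Ideal.span {(p : ZMod (p ^ s)) ^ j} →
      a ∉ Ideal.span {(p : ZMod (p ^ s)) ^ (j + 1)} → #{t | g t = a ∨ g t = -a} = p - 1)
    {a : ZMod (p ^ s)} (ha : a ≠ 0) :
    #{t | g t = a ∨ g t = -a} + (if a ∈ powMultiples p s (k + 1) then 1 else 0)
      = if a ∈ powMultiples p s k then p else 0 := by
  by_cases hk1 : a ∈ Ideal.span {(p : ZMod (p ^ s)) ^ (k + 1)}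
  · obtain ⟨j, hkj, hjs, haj, haj1⟩ :=
      exists_mem_span_pow_notMem_span_pow_succ (natCast_pow_eq_zero_of_le le_rfl) ha hk1
    have hk : a ∈ Ideal.span {(p : ZMod (p ^ s)) ^ k} :=
      Ideal.span_singleton_le_span_singleton.mpr (pow_dvd_pow _ k.le_succ) hk1
    rw [if_pos (mem_powMultiples.mpr hk1), if_pos (mem_powMultiples.mpr hk),
      hcount2 j hkj (by omega) a haj haj1]
    omega
  by_cases hk : a ∈ Ideal.span {(p : ZMod (p ^ s)) ^ k}
  · rw [if_neg (mt mem_powMultiples.mp hk1), if_pos (mem_powMultiples.mpr hk), hcount1 a hk hk1,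
      add_zero]
  · rw [if_neg (mt mem_powMultiples.mp hk1), if_neg (mt mem_powMultiples.mp hk), add_zero,
      card_eq_zero, filter_eq_empty_iff]
    rintro t - (h | h)
    · exact hk (h ▸ hcoords t)
    · exact hk (by rw [← neg_neg a, ← h]; exact neg_mem (hcoords t))

lemma two_mul_sum_add_sum_powMultiples_succ (hg : ∀ t, g t ≠ -g t)
    (hmult : ∀ a : ZMod (p ^ s), a ≠ 0 →
      #{t | g t = a ∨ g t = -a} + (if a ∈ powMultiples p s (k + 1) then 1 else 0)
        = if a ∈ powMultiples p s k then p else 0)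
    {F : ZMod (p ^ s) → ℕ} (hF0 : F 0 = 0) (hFneg : ∀ a, F (-a) = F a) :
    2 * ∑ t, F (g t) + ∑ a ∈ powMultiples p s (k + 1), F a
      = p * ∑ a ∈ powMultiples p s k, F a := by
  have hcount (a : ZMod (p ^ s)) :
      (#{t | g t = a ∨ g t = -a} + if a ∈ powMultiples p s (k + 1) then 1 else 0) * F a
        = (if a ∈ powMultiples p s k then p else 0) * F a := by
    rcases eq_or_ne a 0 with rfl | ha
    · rw [hF0, mul_zero, mul_zero]
    · rw [hmult a ha]
  rw [← smul_eq_mul 2, ← sum_card_filter_eq_or_eq_neg_smul hg hFneg]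
  simpa only [smul_eq_mul, add_mul, sum_add_distrib, ite_mul, one_mul, zero_mul,
    Fintype.sum_ite_mem, mul_sum] using Fintype.sum_congr _ _ hcount

end Construction

open scoped Classical in
theorem equidistant_construction_rank_one_general (p s i N : ℕ) (hp : p.Prime)
    (hodd : Odd p) (hi1 : 1 ≤ i)
    (m : ℕ) (hm : m = p ^ s) [NeZero m]
    (g : Fin N → ZMod m)
    (hcoords : ∀ t, g t ≠ 0 ∧ g t ∈ Ideal.span {(p : ZMod m) ^ (i - 1)})
    (hcount1 : ∀ a : ZMod m, a ∈ Ideal.span {(p : ZMod m) ^ (i - 1)} →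
      a ∉ Ideal.span {(p : ZMod m) ^ i} →
      (Finset.univ.filter (fun t : Fin N => g t = a ∨ g t = -a)).card = p)
    (hcount2 : ∀ j, i ≤ j → j ≤ s - 1 → ∀ a : ZMod m,
      a ∈ Ideal.span {(p : ZMod m) ^ j} →
      a ∉ Ideal.span {(p : ZMod m) ^ (j + 1)} →
      (Finset.univ.filter (fun t : Fin N => g t = a ∨ g t = -a)).card = p - 1) :
    ∀ lam : ZMod m, lam • g ≠ 0 →
      8 * leeWV m N (lam • g) = p ^ (2 * s - i) * (p ^ 2 - 1) := by
  subst hm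
  obtain ⟨k, rfl⟩ : ∃ k, i = k + 1 := ⟨i - 1, by omega⟩
  simp only [Nat.add_sub_cancel] at hcoords hcount1
  intro lam hlam
  obtain ⟨v, u, hu, rfl⟩ := ZMod.exists_eq_pow_mul_isUnit hp (left_ne_zero_of_smul hlam)
  have hvk : v + k < s := lt_of_not_ge fun h =>
    hlam (pow_mul_smul_eq_zero_of_le (fun t => (hcoords t).2) h u)
  have hweight := two_mul_sum_add_sum_powMultiples_succ
    (fun t => ZMod.ne_neg_self hodd.pow (hcoords t).1)
    (fun a => card_filter_add_ite_mem_powMultiples hp.pos (fun t => (hcoords t).2) hcount1 hcount2)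
    (F := fun a => leeW (p ^ s) ((p : ZMod (p ^ s)) ^ v * u * a))
    (by rw [mul_zero, leeW_zero]) (fun a => by rw [mul_neg, leeW_neg])
  have hk := four_mul_sum_leeW_pow_mul_unit_mul_add hodd hu (k := k) (v := v) (by omega)
  have hk1 := four_mul_sum_leeW_pow_mul_unit_mul_add hodd hu (k := k + 1) (v := v) (by omega)
  rw [show 2 * s - k = 2 * s - (k + 1) + 1 by omega, pow_succ] at hk
  rw [show k + 1 + 2 * v = k + 2 * v + 1 by ring, pow_succ] at hk1
  simp only [leeWV, Pi.smul_apply, smul_eq_mul]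
  zify [Nat.one_le_pow 2 p hp.pos] at hweight hk hk1 ⊢
  linear_combination 4 * hweight - hk1 + (p : ℤ) * hk

open scoped Classical in
/-- Construction of a shortest-length rank-1 Lee-equidistant code over `ℤ/p^sℤ`:
if `g` consists of `p` copies of each element of `⟨p^{i-1}⟩ \ ⟨p^i⟩` up to sign
(so each pair `{a,-a}` occupies `p` coordinates) and `p-1` copies of each element of
`⟨p^j⟩ \ ⟨p^{j+1}⟩` up to sign for every `j ∈ {i,…,s-1}`, then every nonzero element
of `⟨g⟩` has Lee weight `p^{2s-i}(p²-1)/8`. -/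
theorem equidistant_construction_rank_one (p s i N : ℕ) (hp : p.Prime)
    (hodd : Odd p) (hs : 0 < s) (hi1 : 1 ≤ i) (his : i ≤ s)
    (m : ℕ) (hm : m = p ^ s) [NeZero m]
    (g : Fin N → ZMod m)
    (hcoords : ∀ t, g t ≠ 0 ∧ g t ∈ Ideal.span {(p : ZMod m) ^ (i - 1)})
    (hcount1 : ∀ a : ZMod m, a ∈ Ideal.span {(p : ZMod m) ^ (i - 1)} →
      a ∉ Ideal.span {(p : ZMod m) ^ i} →
      (Finset.univ.filter (fun t : Fin N => g t = a ∨ g t = -a)).card = p)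
    (hcount2 : ∀ j, i ≤ j → j ≤ s - 1 → ∀ a : ZMod m,
      a ∈ Ideal.span {(p : ZMod m) ^ j} →
      a ∉ Ideal.span {(p : ZMod m) ^ (j + 1)} →
      (Finset.univ.filter (fun t : Fin N => g t = a ∨ g t = -a)).card = p - 1) :
    ∀ lam : ZMod m, lam • g ≠ 0 →
      8 * leeWV m N (lam • g) = p ^ (2 * s - i) * (p ^ 2 - 1) :=
  equidistant_construction_rank_one_general p s i N hp hodd hi1 m hm g hcoords hcount1 hcount2
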